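/- Let V, d, K_g, K_h be positive integers, B_r̃, B_h > 0, and let W be a real V×d matrix. Fix r̃^q, r̃^i ∈ ℝ^V with ‖r̃^q‖₂ ≤ B_r̃ and ‖r̃^i‖₂ ≤ B_r̃, and set g̃^q = W^⊤ r̃^q, g̃^i = W^⊤ r̃^i, so that ‖g̃^q‖₂ ≤ σ₁(W)·B_r̃ and ‖g̃^i‖₂ ≤ σ₁(W)·B_r̃, where σ₁(W) is the largest singular value of W. Let CS_g : ℝ^d → ℝ^{K_g} and CS_h : ℝ^d → ℝ^{K_h} be independent CountSketches following the random CountSketch model, and fix h^q, h^i ∈ ℝ^d with ‖h^q‖₂ ≤ B_h and ‖h^i‖₂ ≤ B_h. Define the GH-channel estimator Î_GH = ⟨CS_g(g̃^q), CS_g(g̃^i)⟩ · ⟨CS_h(h^q), CS_h(h^i)⟩. Then, with γ_g = ⟨g̃^q, g̃^i⟩ and β = ⟨h^q, h^i⟩, Var[Î_GH] ≤ V_g·V_h + γ_g²·V_h + β²·V_g with V_g = (‖g̃^q‖₂²‖g̃^i‖₂² + γ_g²)/K_g and V_h = (‖h^q‖₂²‖h^i‖₂² + β²)/K_h; in particular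 Var[Î_GH] ≤ σ₁(W)⁴·B_r̃⁴·B_h⁴·(4/(K_g·K_h) + 2/K_h + 2/K_g). -/

import Mathlib

open MeasureTheory ProbabilityTheory
open scoped BigOperators

/-- The random CountSketch model on a probability space `(Ω, P)`: a random bucket
hash `η : Fin D → Fin K` and random signs `s : Fin D → {−1,+1}` such that the
signs are mutually independent and uniform on `{−1,+1}`, the bucket hash is
independent of the signs, and `P(η(i) = η(j)) = 1/K` for all `i ≠ j`. -/
structure CountSketchModel (Ω : Type*) [MeasurableSpace Ω] (P : MeasureTheory.Measure Ω)
    (D K : ℕ) where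
  η : Ω → Fin D → Fin K
  s : Ω → Fin D → ℝ
  meas_η : Measurable η
  meas_s : Measurable s
  sign_val : ∀ ω i, s ω i = 1 ∨ s ω i = -1
  sign_prob : ∀ i, P {ω | s ω i = 1} = 1 / 2
  sign_indep : iIndepFun (fun i ω => s ω i) P
  hash_indep_sign : IndepFun η s P
  collision : ∀ i j, i ≠ j → P {ω | η ω i = η ω j} = (K : ENNReal)⁻¹

/-- The CountSketch of `x ∈ ℝ^D`: `CS(x)_k = ∑_{i : η(i) = k} s(i)·x_i`. -/
def CountSketchModel.CS {Ω : Type*} [MeasurableSpace Ω] {P : MeasureTheory.Measure Ω}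
    {D K : ℕ} (M : CountSketchModel Ω P D K) (ω : Ω) (x : Fin D → ℝ) :
    Fin K → ℝ :=
  fun k => ∑ i, if M.η ω i = k then M.s ω i * x i else 0

/-- The variance `Var[f] = E[f²] - (E[f])²` of a real random variable. -/
noncomputable def var {Ω : Type*} [MeasurableSpace Ω] (P : Measure Ω) (f : Ω → ℝ) : ℝ :=
  (∫ ω, f ω ^ 2 ∂P) - (∫ ω, f ω ∂P) ^ 2

/-- The largest singular value (Euclidean operator norm) of a real `V×d` matrix. -/
noncomputable def sigma1 {V d : ℕ} (W : Matrix (Fin V) (Fin d) ℝ) : ℝ :=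
  ‖LinearMap.toContinuousLinearMap (Matrix.toEuclideanLin W)‖

/-!
Write `⟨CS(x), CS(y)⟩ = ∑_{i,j} x_i y_j ξ_{ij}` with `ξ_{ij} = 1[η(i) = η(j)] s(i) s(j)`.
Then `ξ_{ii} = 1`, and for `i ≠ j` the independence of hash and signs gives `E ξ_{ij} = 0`
and `E[ξ_{ij} ξ_{kl}] = (δ_{ik} δ_{jl} + δ_{il} δ_{jk}) / K`, because `E[s(i)s(j)s(k)s(l)]`
vanishes unless the indices pair up. Hence the sketched inner product is unbiased with
second moment at most `⟨x,y⟩² + (‖x‖²‖y‖² + ⟨x,y⟩²) / K`. For the product `XY` of two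
independent sketched inner products, `Var[XY] = E[X²] E[Y²] - (E X · E Y)²`, which
expands to `V_g V_h + γ_g² V_h + β² V_g`. The explicit bound follows from
`‖Wᵀ r‖ ≤ σ₁(W) ‖r‖` (`Wᵀ` is the adjoint of `W`) and Cauchy–Schwarz.
-/

lemma var_mul_eq_of_indepFun {Ω : Type*} [MeasurableSpace Ω] {P : Measure Ω} {X Y : Ω → ℝ}
    (hXY : IndepFun X Y P) (hX : AEStronglyMeasurable X P) (hY : AEStronglyMeasurable Y P) :
    var P (fun ω => X ω * Y ω) =
      (∫ ω, X ω ^ 2 ∂P) * (∫ ω, Y ω ^ 2 ∂P) - ((∫ ω, X ω ∂P) * ∫ ω, Y ω ∂P) ^ 2 := by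
  have hXY2 : IndepFun (fun ω => X ω ^ 2) (fun ω => Y ω ^ 2) P :=
    hXY.comp (measurable_id.pow_const 2) (measurable_id.pow_const 2)
  simp only [var, mul_pow]
  rw [hXY2.integral_fun_mul_eq_mul_integral (hX.pow 2) (hY.pow 2),
    hXY.integral_fun_mul_eq_mul_integral hX hY]
  ring

lemma var_mul_le_of_indepFun {Ω : Type*} [MeasurableSpace Ω] {P : Measure Ω} {X Y : Ω → ℝ}
    (hXY : IndepFun X Y P) (hX : AEStronglyMeasurable X P) (hY : AEStronglyMeasurable Y P)
    {a b vX vY : ℝ} (hEX : ∫ ω, X ω ∂P = a) (hEY : ∫ ω, Y ω ∂P = b)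
    (hEX2 : ∫ ω, X ω ^ 2 ∂P ≤ a ^ 2 + vX) (hEY2 : ∫ ω, Y ω ^ 2 ∂P ≤ b ^ 2 + vY)
    (hvX : 0 ≤ vX) :
    var P (fun ω => X ω * Y ω) ≤ vX * vY + a ^ 2 * vY + b ^ 2 * vX := by
  rw [var_mul_eq_of_indepFun hXY hX hY, hEX, hEY]
  have := mul_le_mul hEX2 hEY2 (integral_nonneg fun ω => sq_nonneg _) (by positivity)
  nlinarith

lemma sum_sq_mul_sum_sq_le_of_sqrt_le {ι : Type*} {s : Finset ι} {x y : ι → ℝ} {B : ℝ}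
    (hx : Real.sqrt (∑ i ∈ s, x i ^ 2) ≤ B) (hy : Real.sqrt (∑ i ∈ s, y i ^ 2) ≤ B) :
    (∑ i ∈ s, x i ^ 2) * (∑ i ∈ s, y i ^ 2) ≤ B ^ 4 := by
  obtain ⟨-, hx⟩ := Real.sqrt_le_iff.mp hx
  obtain ⟨-, hy⟩ := Real.sqrt_le_iff.mp hy
  calc _ ≤ B ^ 2 * B ^ 2 := mul_le_mul hx hy (by positivity) (by positivity)
    _ = B ^ 4 := by ring

lemma sqrt_sum_sq_transpose_mulVec_le {V d : ℕ} (W : Matrix (Fin V) (Fin d) ℝ)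
    (r : Fin V → ℝ) :
    Real.sqrt (∑ j, (∑ v, W v j * r v) ^ 2) ≤ sigma1 W * Real.sqrt (∑ v, r v ^ 2) := by
  let T := LinearMap.toContinuousLinearMap (Matrix.toEuclideanLin W.transpose)
  have hT : ‖T‖ = sigma1 W := by
    simp only [T]
    rw [← Matrix.conjTranspose_eq_transpose_of_trivial,
      Matrix.toEuclideanLin_conjTranspose_eq_adjoint, LinearMap.adjoint_toContinuousLinearMap]
    exact ContinuousLinearMap.adjoint.norm_map _
  have := T.le_opNorm (WithLp.toLp 2 r)
  rw [hT] at this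
  simpa [T, EuclideanSpace.norm_eq, Matrix.mulVec, dotProduct, mul_comm] using this

lemma sum_sum_mul_ite_le {ι : Type*} [Fintype ι] [DecidableEq ι] (x y : ι → ℝ) {c : ℝ}
    (hc : 0 ≤ c) :
    ∑ i, ∑ j, x i * y j * (if i = j then ∑ i, x i * y i else (x i * y j + x j * y i) * c) ≤
      (∑ i, x i * y i) ^ 2 + ((∑ i, x i ^ 2) * (∑ i, y i ^ 2) + (∑ i, x i * y i) ^ 2) * c := by
  have hdiag : ∑ i, ∑ j, (if i = j then x i * y i * ∑ i, x i * y i else 0) =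
      (∑ i, x i * y i) ^ 2 := by
    simp [sq, Finset.sum_mul]
  have hfull : ∑ i, ∑ j, x i * y j * (x i * y j + x j * y i) =
      (∑ i, x i ^ 2) * (∑ i, y i ^ 2) + (∑ i, x i * y i) ^ 2 := by
    simp_rw [sq, Finset.sum_mul_sum, ← Finset.sum_add_distrib]
    exact Finset.sum_congr rfl fun i _ => Finset.sum_congr rfl fun j _ => by ring
  calc _ ≤ ∑ i, ∑ j, ((if i = j then x i * y i * ∑ i, x i * y i else 0) +
          x i * y j * (x i * y j + x j * y i) * c) := by
        gcongr with i _ j _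
        split_ifs with hij
        · subst hij
          have : 0 ≤ (x i * y i) ^ 2 * 2 * c := by positivity
          linarith
        · linarith
    _ = _ := by
        simp only [Finset.sum_add_distrib, ← Finset.sum_mul]
        rw [hdiag, hfull]

namespace CountSketchModel

variable {Ω : Type*} [MeasurableSpace Ω] {P : Measure Ω} {D K : ℕ}
  (M : CountSketchModel Ω P D K)

lemma measurable_sign (i : Fin D) : Measurable fun ω => M.s ω i :=
  (measurable_pi_apply i).comp M.meas_s

lemma sign_mul_self (ω : Ω) (i : Fin D) : M.s ω i * M.s ω i = 1 := by
  rcases M.sign_val ω i with h | h <;> simp [h]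

lemma abs_sign (ω : Ω) (i : Fin D) : |M.s ω i| = 1 := by
  rcases M.sign_val ω i with h | h <;> simp [h]

lemma integral_collision_indicator {i j : Fin D} (hij : i ≠ j) :
    ∫ ω, (if M.η ω i = M.η ω j then (1 : ℝ) else 0) ∂P = (K : ℝ)⁻¹ := by
  have hmeas : MeasurableSet {ω | M.η ω i = M.η ω j} :=
    measurableSet_eq_fun ((measurable_pi_apply i).comp M.meas_η)
      ((measurable_pi_apply j).comp M.meas_η)
  have hind : (fun ω => if M.η ω i = M.η ω j then (1 : ℝ) else 0) =
      {ω | M.η ω i = M.η ω j}.indicator 1 := by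
    ext ω; simp [Set.indicator_apply]
  rw [hind, integral_indicator_one hmeas, measureReal_def, M.collision i j hij]
  simp

lemma integral_hash_mul_sign {F : (Fin D → Fin K) → ℝ} {G : (Fin D → ℝ) → ℝ}
    (hG : Measurable G) :
    ∫ ω, F (M.η ω) * G (M.s ω) ∂P = (∫ ω, F (M.η ω) ∂P) * ∫ ω, G (M.s ω) ∂P :=
  (M.hash_indep_sign.comp (measurable_of_countable F) hG).integral_fun_mul_eq_mul_integral
    ((measurable_of_countable F).comp M.meas_η).aestronglyMeasurable
    (hG.comp M.meas_s).aestronglyMeasurable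

def collisionSign (i j : Fin D) (ω : Ω) : ℝ :=
  (if M.η ω i = M.η ω j then 1 else 0) * (M.s ω i * M.s ω j)

lemma collisionSign_self (i : Fin D) (ω : Ω) : M.collisionSign i i ω = 1 := by
  simp [collisionSign, M.sign_mul_self]

lemma abs_collisionSign_le (i j : Fin D) (ω : Ω) : |M.collisionSign i j ω| ≤ 1 := by
  unfold collisionSign
  split_ifs <;> simp [abs_mul, M.abs_sign]

lemma measurable_collisionSign (i j : Fin D) : Measurable (M.collisionSign i j) :=
  ((measurable_of_countable fun e : Fin D → Fin K => if e i = e j then (1 : ℝ) else 0).comp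
    M.meas_η).mul ((M.measurable_sign i).mul (M.measurable_sign j))

lemma integrable_collisionSign [IsFiniteMeasure P] (i j : Fin D) :
    Integrable (M.collisionSign i j) P :=
  .of_bound (M.measurable_collisionSign i j).aestronglyMeasurable 1
    (ae_of_all _ (M.abs_collisionSign_le i j))

lemma inner_CS_eq_sum_collisionSign (x y : Fin D → ℝ) (ω : Ω) :
    ∑ k, M.CS ω x k * M.CS ω y k = ∑ i, ∑ j, x i * y j * M.collisionSign i j ω := by
  simp only [CS, collisionSign, Finset.sum_mul_sum]
  rw [Finset.sum_comm]
  refine Finset.sum_congr rfl fun i _ => ?_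
  rw [Finset.sum_comm]
  refine Finset.sum_congr rfl fun j _ => ?_
  simp only [mul_ite, ite_mul, zero_mul, mul_zero, Finset.sum_ite_eq, Finset.mem_univ,
    ↓reduceIte, one_mul]
  split_ifs <;> ring

lemma integrable_inner_CS [IsFiniteMeasure P] (x y : Fin D → ℝ) :
    Integrable (fun ω => ∑ k, M.CS ω x k * M.CS ω y k) P := by
  simp_rw [M.inner_CS_eq_sum_collisionSign]
  exact integrable_finsetSum _ fun i _ => integrable_finsetSum _ fun j _ =>
    (M.integrable_collisionSign i j).const_mul _

lemma exists_measurable_inner_CS_eq_comp (x y : Fin D → ℝ) :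
    ∃ φ : (Fin D → Fin K) × (Fin D → ℝ) → ℝ, Measurable φ ∧
      (fun ω => ∑ k, M.CS ω x k * M.CS ω y k) = φ ∘ fun ω => (M.η ω, M.s ω) :=
  ⟨fun p => ∑ k, (∑ i, if p.1 i = k then p.2 i * x i else 0) *
      ∑ i, if p.1 i = k then p.2 i * y i else 0,
    measurable_from_prod_countable_right fun e => by
      refine Finset.measurable_sum _ fun k _ => .mul ?_ ?_ <;>
        exact Finset.measurable_sum _ fun i _ =>
          Measurable.ite (.const (e i = k)) (by fun_prop) measurable_const, rfl⟩

lemma indepFun_inner_CS {D' K' : ℕ} {Mg : CountSketchModel Ω P D K}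
    {Mh : CountSketchModel Ω P D' K'}
    (h : IndepFun (fun ω => (Mg.η ω, Mg.s ω)) (fun ω => (Mh.η ω, Mh.s ω)) P)
    (x y : Fin D → ℝ) (x' y' : Fin D' → ℝ) :
    IndepFun (fun ω => ∑ k, Mg.CS ω x k * Mg.CS ω y k)
      (fun ω => ∑ k, Mh.CS ω x' k * Mh.CS ω y' k) P := by
  obtain ⟨φ, hφ, hX⟩ := Mg.exists_measurable_inner_CS_eq_comp x y
  obtain ⟨ψ, hψ, hY⟩ := Mh.exists_measurable_inner_CS_eq_comp x' y'
  rw [hX, hY]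
  exact h.comp hφ hψ

variable [IsProbabilityMeasure P]

lemma integral_sign (i : Fin D) : ∫ ω, M.s ω i ∂P = 0 := by
  set A := {ω | M.s ω i = 1}
  have hA : MeasurableSet A := M.measurable_sign i (measurableSet_singleton 1)
  have hs : (fun ω => M.s ω i) = fun ω => A.indicator (fun _ => (2 : ℝ)) ω - 1 := by
    funext ω
    rcases M.sign_val ω i with h | h <;> norm_num [A, h, Set.indicator]
  rw [hs, integral_sub ((integrable_const _).indicator hA) (integrable_const 1),
    integral_indicator_const _ hA, measureReal_def, M.sign_prob]
  norm_num

lemma integral_sign_mul_sign {i j : Fin D} (h : i ≠ j) :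
    ∫ ω, M.s ω i * M.s ω j ∂P = 0 := by
  rw [(M.sign_indep.indepFun h).integral_fun_mul_eq_mul_integral
    (M.measurable_sign i).aestronglyMeasurable (M.measurable_sign j).aestronglyMeasurable]
  simp [M.integral_sign]

lemma integral_sign_mul_four {i j k l : Fin D} (hij : i ≠ j)
    (hkl : k ≠ l) :
    ∫ ω, M.s ω i * M.s ω j * (M.s ω k * M.s ω l) ∂P =
      (if i = k ∧ j = l then 1 else 0) + (if i = l ∧ j = k then 1 else 0) := by
  by_cases hmatch : i = k ∧ j = l
  · obtain ⟨rfl, rfl⟩ := hmatch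
    simp [hij, mul_mul_mul_comm, M.sign_mul_self]
  by_cases hswap : i = l ∧ j = k
  · obtain ⟨rfl, rfl⟩ := hswap
    simp [hij, mul_mul_mul_comm, mul_comm (M.s _ j), M.sign_mul_self]
  rw [if_neg hmatch, if_neg hswap, add_zero]
  have cancel : ∀ a {b c : Fin D}, b ≠ c →
      ∫ ω, M.s ω a * M.s ω a * (M.s ω b * M.s ω c) ∂P = 0 := by
    intro a b c hbc
    simp_rw [M.sign_mul_self, one_mul]
    exact M.integral_sign_mul_sign hbc
  rcases eq_or_ne i k with rfl | hik
  · rw [← cancel i (by tauto : j ≠ l)]; congr 1; ext ω; ring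
  rcases eq_or_ne i l with rfl | hil
  · rw [← cancel i (by tauto : j ≠ k)]; congr 1; ext ω; ring
  rcases eq_or_ne j k with rfl | hjk
  · rw [← cancel j (by tauto : i ≠ l)]; congr 1; ext ω; ring
  rcases eq_or_ne j l with rfl | hjl
  · rw [← cancel j hik]; congr 1; ext ω; ring
  have hindep := M.sign_indep.indepFun_mul_mul M.measurable_sign i j k l hik hil hjk hjl
  calc ∫ ω, M.s ω i * M.s ω j * (M.s ω k * M.s ω l) ∂P
      = (∫ ω, M.s ω i * M.s ω j ∂P) * ∫ ω, M.s ω k * M.s ω l ∂P :=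
        hindep.integral_fun_mul_eq_mul_integral
          ((M.measurable_sign i).mul (M.measurable_sign j)).aestronglyMeasurable
          ((M.measurable_sign k).mul (M.measurable_sign l)).aestronglyMeasurable
    _ = 0 := by rw [M.integral_sign_mul_sign hij, zero_mul]

lemma integral_collisionSign (i j : Fin D) :
    ∫ ω, M.collisionSign i j ω ∂P = if i = j then 1 else 0 := by
  split_ifs with hij
  · simp [hij, collisionSign_self]
  calc ∫ ω, M.collisionSign i j ω ∂P
      = (∫ ω, (if M.η ω i = M.η ω j then (1 : ℝ) else 0) ∂P) * ∫ ω, M.s ω i * M.s ω j ∂P :=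
        M.integral_hash_mul_sign (F := fun e => if e i = e j then 1 else 0)
          (G := fun v => v i * v j) (by fun_prop)
    _ = 0 := by rw [M.integral_sign_mul_sign hij, mul_zero]

lemma integral_collisionSign_mul_of_ne {i j : Fin D} (hij : i ≠ j)
    (k l : Fin D) :
    ∫ ω, M.collisionSign i j ω * M.collisionSign k l ω ∂P =
      (if i = k ∧ j = l then (K : ℝ)⁻¹ else 0) + (if i = l ∧ j = k then (K : ℝ)⁻¹ else 0) := by
  rcases eq_or_ne k l with rfl | hkl
  · have hik : ¬(i = k ∧ j = k) := by rintro ⟨rfl, rfl⟩; exact hij rfl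
    simp [hik, collisionSign_self, M.integral_collisionSign, hij]
  calc ∫ ω, M.collisionSign i j ω * M.collisionSign k l ω ∂P
      = ∫ ω, ((if M.η ω i = M.η ω j then 1 else 0) * (if M.η ω k = M.η ω l then 1 else 0)) *
          (M.s ω i * M.s ω j * (M.s ω k * M.s ω l)) ∂P := by
        congr 1; ext ω; simp only [collisionSign]; ring
    _ = (∫ ω, (if M.η ω i = M.η ω j then (1 : ℝ) else 0) *
            (if M.η ω k = M.η ω l then 1 else 0) ∂P) *
          ∫ ω, M.s ω i * M.s ω j * (M.s ω k * M.s ω l) ∂P :=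
        M.integral_hash_mul_sign
          (F := fun e => (if e i = e j then 1 else 0) * (if e k = e l then 1 else 0))
          (G := fun v => v i * v j * (v k * v l)) (by fun_prop)
    _ = _ := by
        rw [M.integral_sign_mul_four hij hkl, mul_add]
        congr 1 <;> split_ifs with hpair
        · obtain ⟨rfl, rfl⟩ := hpair
          simp_rw [ite_zero_mul_ite_zero, and_self, mul_one, M.integral_collision_indicator hij]
        · rw [mul_zero]
        · obtain ⟨rfl, rfl⟩ := hpair
          simp_rw [@eq_comm _ (M.η _ j), ite_zero_mul_ite_zero, and_self, mul_one,
            M.integral_collision_indicator hij]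
        · rw [mul_zero]

lemma integral_inner_CS (x y : Fin D → ℝ) :
    ∫ ω, ∑ k, M.CS ω x k * M.CS ω y k ∂P = ∑ i, x i * y i := by
  simp_rw [M.inner_CS_eq_sum_collisionSign]
  rw [integral_finsetSum _ fun i _ => integrable_finsetSum _ fun j _ =>
    (M.integrable_collisionSign i j).const_mul _]
  refine Finset.sum_congr rfl fun i _ => ?_
  rw [integral_finsetSum _ fun j _ => (M.integrable_collisionSign i j).const_mul _]
  simp [integral_const_mul, M.integral_collisionSign]

lemma integral_collisionSign_mul_inner_CS (x y : Fin D → ℝ) (i j : Fin D) :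
    ∫ ω, M.collisionSign i j ω * ∑ k, M.CS ω x k * M.CS ω y k ∂P =
      if i = j then ∑ i, x i * y i else (x i * y j + x j * y i) * (K : ℝ)⁻¹ := by
  split_ifs with hij
  · simp [hij, collisionSign_self, M.integral_inner_CS]
  have hint : ∀ k l, Integrable
      (fun ω => x k * y l * (M.collisionSign i j ω * M.collisionSign k l ω)) P :=
    fun k l => ((M.integrable_collisionSign k l).bdd_mul
      (M.measurable_collisionSign i j).aestronglyMeasurable
      (ae_of_all _ (M.abs_collisionSign_le i j))).const_mul _
  simp_rw [M.inner_CS_eq_sum_collisionSign, Finset.mul_sum,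
    mul_left_comm (M.collisionSign i j _)]
  rw [integral_finsetSum _ fun k _ => integrable_finsetSum _ fun l _ => hint k l]
  simp_rw [integral_finsetSum _ fun l _ => hint _ l, integral_const_mul,
    M.integral_collisionSign_mul_of_ne hij]
  simp only [ite_and, mul_add, mul_ite, mul_zero, Finset.sum_add_distrib, Finset.sum_ite_irrel,
    Finset.sum_ite_eq, Finset.mem_univ, ↓reduceIte, Finset.sum_const_zero]
  ring

lemma integral_inner_CS_sq_le (x y : Fin D → ℝ) :
    ∫ ω, (∑ k, M.CS ω x k * M.CS ω y k) ^ 2 ∂P ≤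
      (∑ i, x i * y i) ^ 2 + ((∑ i, x i ^ 2) * (∑ i, y i ^ 2) + (∑ i, x i * y i) ^ 2) / K := by
  set X := fun ω => ∑ k, M.CS ω x k * M.CS ω y k
  have hsq : ∀ ω, X ω ^ 2 = ∑ i, ∑ j, x i * y j * (M.collisionSign i j ω * X ω) := fun ω => by
    rw [sq]
    change (∑ k, M.CS ω x k * M.CS ω y k) * X ω = _
    rw [M.inner_CS_eq_sum_collisionSign]
    simp_rw [Finset.sum_mul, mul_assoc]
  have hint : ∀ i j, Integrable (fun ω => x i * y j * (M.collisionSign i j ω * X ω)) P :=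
    fun i j => ((M.integrable_inner_CS x y).bdd_mul
      (M.measurable_collisionSign i j).aestronglyMeasurable
      (ae_of_all _ (M.abs_collisionSign_le i j))).const_mul _
  calc ∫ ω, X ω ^ 2 ∂P
      = ∑ i, ∑ j, x i * y j *
          (if i = j then ∑ i, x i * y i else (x i * y j + x j * y i) * (K : ℝ)⁻¹) := by
        rw [integral_congr_ae (ae_of_all _ hsq),
          integral_finsetSum _ fun i _ => integrable_finsetSum _ fun j _ => hint i j]
        refine Finset.sum_congr rfl fun i _ => ?_
        rw [integral_finsetSum _ fun j _ => hint i j]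
        simp_rw [integral_const_mul, X, M.integral_collisionSign_mul_inner_CS]
    _ ≤ _ := by
        rw [div_eq_mul_inv]
        exact sum_sum_mul_ite_le x y (by positivity)

end CountSketchModel

lemma var_inner_CS_mul_inner_CS_le {Ω : Type*} [MeasurableSpace Ω] {P : Measure Ω}
    [IsProbabilityMeasure P] {D K D' K' : ℕ} (Mg : CountSketchModel Ω P D K)
    (Mh : CountSketchModel Ω P D' K')
    (h : IndepFun (fun ω => (Mg.η ω, Mg.s ω)) (fun ω => (Mh.η ω, Mh.s ω)) P)
    (x y : Fin D → ℝ) (x' y' : Fin D' → ℝ) :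
    var P (fun ω =>
        (∑ k, Mg.CS ω x k * Mg.CS ω y k) * (∑ k, Mh.CS ω x' k * Mh.CS ω y' k)) ≤
      ((∑ j, x j ^ 2) * (∑ j, y j ^ 2) + (∑ j, x j * y j) ^ 2) / K
          * (((∑ j, x' j ^ 2) * (∑ j, y' j ^ 2) + (∑ j, x' j * y' j) ^ 2) / K')
        + (∑ j, x j * y j) ^ 2
          * (((∑ j, x' j ^ 2) * (∑ j, y' j ^ 2) + (∑ j, x' j * y' j) ^ 2) / K')
        + (∑ j, x' j * y' j) ^ 2
          * (((∑ j, x j ^ 2) * (∑ j, y j ^ 2) + (∑ j, x j * y j) ^ 2) / K) :=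
  var_mul_le_of_indepFun (CountSketchModel.indepFun_inner_CS h x y x' y')
    (Mg.integrable_inner_CS x y).aestronglyMeasurable
    (Mh.integrable_inner_CS x' y').aestronglyMeasurable
    (Mg.integral_inner_CS x y) (Mh.integral_inner_CS x' y')
    (Mg.integral_inner_CS_sq_le x y) (Mh.integral_inner_CS_sq_le x' y') (by positivity)

theorem gh_channel_variance_bound_general
    {Ω : Type*} [MeasurableSpace Ω] (P : Measure Ω) [IsProbabilityMeasure P]
    (V d Kg Kh : ℕ)
    (Br Bh : ℝ)
    (W : Matrix (Fin V) (Fin d) ℝ)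
    (rq ri : Fin V → ℝ)
    (hrq : Real.sqrt (∑ v, rq v ^ 2) ≤ Br) (hri : Real.sqrt (∑ v, ri v ^ 2) ≤ Br)
    (gq gi : Fin d → ℝ)
    (hgq : gq = fun j => ∑ v, W v j * rq v) (hgi : gi = fun j => ∑ v, W v j * ri v)
    (Mg : CountSketchModel Ω P d Kg) (Mh : CountSketchModel Ω P d Kh)
    (hindep : IndepFun (fun ω => (Mg.η ω, Mg.s ω)) (fun ω => (Mh.η ω, Mh.s ω)) P)
    (hq hi : Fin d → ℝ)
    (hhq : Real.sqrt (∑ j, hq j ^ 2) ≤ Bh) (hhi : Real.sqrt (∑ j, hi j ^ 2) ≤ Bh) :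
    (Real.sqrt (∑ j, gq j ^ 2) ≤ sigma1 W * Br)
    ∧ (Real.sqrt (∑ j, gi j ^ 2) ≤ sigma1 W * Br)
    ∧ (var P (fun ω =>
          (∑ k, Mg.CS ω gq k * Mg.CS ω gi k) * (∑ k, Mh.CS ω hq k * Mh.CS ω hi k))
        ≤ ((∑ j, gq j ^ 2) * (∑ j, gi j ^ 2) + (∑ j, gq j * gi j) ^ 2) / Kg
              * (((∑ j, hq j ^ 2) * (∑ j, hi j ^ 2) + (∑ j, hq j * hi j) ^ 2) / Kh)
          + (∑ j, gq j * gi j) ^ 2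
              * (((∑ j, hq j ^ 2) * (∑ j, hi j ^ 2) + (∑ j, hq j * hi j) ^ 2) / Kh)
          + (∑ j, hq j * hi j) ^ 2
              * (((∑ j, gq j ^ 2) * (∑ j, gi j ^ 2) + (∑ j, gq j * gi j) ^ 2) / Kg))
    ∧ var P (fun ω =>
          (∑ k, Mg.CS ω gq k * Mg.CS ω gi k) * (∑ k, Mh.CS ω hq k * Mh.CS ω hi k))
        ≤ sigma1 W ^ 4 * Br ^ 4 * Bh ^ 4 * (4 / ((Kg : ℝ) * Kh) + 2 / Kh + 2 / Kg) := by
  have hσ : 0 ≤ sigma1 W := norm_nonneg _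
  have hgq' : Real.sqrt (∑ j, gq j ^ 2) ≤ sigma1 W * Br := hgq ▸
    (sqrt_sum_sq_transpose_mulVec_le W rq).trans (mul_le_mul_of_nonneg_left hrq hσ)
  have hgi' : Real.sqrt (∑ j, gi j ^ 2) ≤ sigma1 W * Br := hgi ▸
    (sqrt_sum_sq_transpose_mulVec_le W ri).trans (mul_le_mul_of_nonneg_left hri hσ)
  have hvar := var_inner_CS_mul_inner_CS_le Mg Mh hindep gq gi hq hi
  refine ⟨hgq', hgi', hvar, hvar.trans ?_⟩
  have hg := sum_sq_mul_sum_sq_le_of_sqrt_le hgq' hgi'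
  have hh := sum_sq_mul_sum_sq_le_of_sqrt_le hhq hhi
  have hγ := (Finset.sum_mul_sq_le_sq_mul_sq _ gq gi).trans hg
  have hβ := (Finset.sum_mul_sq_le_sq_mul_sq _ hq hi).trans hh
  calc _ ≤ 2 * (sigma1 W * Br) ^ 4 / Kg * (2 * Bh ^ 4 / Kh)
          + (sigma1 W * Br) ^ 4 * (2 * Bh ^ 4 / Kh)
          + Bh ^ 4 * (2 * (sigma1 W * Br) ^ 4 / Kg) := by
        gcongr <;> linarith
    _ = _ := by ring

/-- GH-channel variance bound: with `g̃^q = W^⊤ r̃^q`,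
`g̃^i = W^⊤ r̃^i` (so `‖g̃^q‖, ‖g̃^i‖ ≤ σ₁(W)·B_r̃`) and independent CountSketches
`CS_g : ℝ^d → ℝ^{K_g}`, `CS_h : ℝ^d → ℝ^{K_h}`, the estimator
`Î_GH = ⟨CS_g(g̃^q), CS_g(g̃^i)⟩·⟨CS_h(h^q), CS_h(h^i)⟩` satisfies
`Var[Î_GH] ≤ V_g·V_h + γ_g²·V_h + β²·V_g` and in particular
`Var[Î_GH] ≤ σ₁(W)⁴·B_r̃⁴·B_h⁴·(4/(K_g·K_h) + 2/K_h + 2/K_g)`. -/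
theorem gh_channel_variance_bound
    {Ω : Type*} [MeasurableSpace Ω] (P : Measure Ω) [IsProbabilityMeasure P]
    (V d Kg Kh : ℕ) (hV : 0 < V) (hd : 0 < d) (hKg : 0 < Kg) (hKh : 0 < Kh)
    (Br Bh : ℝ) (hBr : 0 < Br) (hBh : 0 < Bh)
    (W : Matrix (Fin V) (Fin d) ℝ)
    (rq ri : Fin V → ℝ)
    (hrq : Real.sqrt (∑ v, rq v ^ 2) ≤ Br) (hri : Real.sqrt (∑ v, ri v ^ 2) ≤ Br)
    (gq gi : Fin d → ℝ)
    (hgq : gq = fun j => ∑ v, W v j * rq v) (hgi : gi = fun j => ∑ v, W v j * ri v)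
    (Mg : CountSketchModel Ω P d Kg) (Mh : CountSketchModel Ω P d Kh)
    (hindep : IndepFun (fun ω => (Mg.η ω, Mg.s ω)) (fun ω => (Mh.η ω, Mh.s ω)) P)
    (hq hi : Fin d → ℝ)
    (hhq : Real.sqrt (∑ j, hq j ^ 2) ≤ Bh) (hhi : Real.sqrt (∑ j, hi j ^ 2) ≤ Bh) :
    (Real.sqrt (∑ j, gq j ^ 2) ≤ sigma1 W * Br)
    ∧ (Real.sqrt (∑ j, gi j ^ 2) ≤ sigma1 W * Br)
    ∧ (var P (fun ω =>
          (∑ k, Mg.CS ω gq k * Mg.CS ω gi k) * (∑ k, Mh.CS ω hq k * Mh.CS ω hi k))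
        ≤ ((∑ j, gq j ^ 2) * (∑ j, gi j ^ 2) + (∑ j, gq j * gi j) ^ 2) / Kg
              * (((∑ j, hq j ^ 2) * (∑ j, hi j ^ 2) + (∑ j, hq j * hi j) ^ 2) / Kh)
          + (∑ j, gq j * gi j) ^ 2
              * (((∑ j, hq j ^ 2) * (∑ j, hi j ^ 2) + (∑ j, hq j * hi j) ^ 2) / Kh)
          + (∑ j, hq j * hi j) ^ 2
              * (((∑ j, gq j ^ 2) * (∑ j, gi j ^ 2) + (∑ j, gq j * gi j) ^ 2) / Kg))
    ∧ var P (fun ω =>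
          (∑ k, Mg.CS ω gq k * Mg.CS ω gi k) * (∑ k, Mh.CS ω hq k * Mh.CS ω hi k))
        ≤ sigma1 W ^ 4 * Br ^ 4 * Bh ^ 4 * (4 / ((Kg : ℝ) * Kh) + 2 / Kh + 2 / Kg) :=
  gh_channel_variance_bound_general P V d Kg Kh Br Bh W rq ri hrq hri gq gi hgq hgi Mg Mh hindep hq
    hi hhq hhi
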